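/- arXiv:2509.24839 — 5 statements merged into one kernel-verified Lean document; each statement's English description precedes it below -/
import Mathlib

section
/- For even n and any k ≥ n/2, the function γ_{2k} : 𝔽₂ⁿ → 𝔽₂ⁿ equals S^{2k mod n} ⊙ (𝟙 + S^{n-1}) ⊙ (𝟙 + S^{n-3}) ⊙ … ⊙ (𝟙 + S). -/
/-!
Since `S^n = id`, the exponent `2k` may be reduced mod `n`, and for even `n` the factors
`𝟙 + S^{2j+1}` are `n/2`-periodic in `j`. Over `𝔽₂` every factor is idempotent, so repeated
factors drop out and only the first `n/2` of them remain.
-/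

open Finset Polynomial

/-- The cyclic left shift on `𝔽₂ⁿ`. -/
def cshift (n : ℕ) (x : Fin n → ZMod 2) : Fin n → ZMod 2 :=
  fun i => x ⟨(i.val + 1) % n, Nat.mod_lt _ (Nat.lt_of_le_of_lt (Nat.zero_le i.val) i.isLt)⟩

/-- `gamma n k` is the function `γ_{2k} = S^{2k} ⊙ (𝟙+S^{2k-1}) ⊙ … ⊙ (𝟙+S)` on `𝔽₂ⁿ`;
`gamma n 0 = id`. -/
def gamma (n k : ℕ) (x : Fin n → ZMod 2) : Fin n → ZMod 2 :=
  fun i => (cshift n)^[2 * k] x i * ∏ j ∈ Finset.range k, (1 + (cshift n)^[2 * j + 1] x i)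

theorem Finset.prod_range_eq_prod_range_of_periodic_of_isIdempotentElem {M : Type*}
    [CommMonoid M] {f : ℕ → M} {m k : ℕ} (hm : 0 < m) (hper : Function.Periodic f m)
    (hidem : ∀ j, IsIdempotentElem (f j)) (hmk : m ≤ k) :
    ∏ j ∈ range k, f j = ∏ j ∈ range m, f j := by
  induction k, hmk using Nat.le_induction with
  | base => rfl
  | succ k _ ih =>
    have hmem : k % m ∈ range m := mem_range.2 (Nat.mod_lt k hm)
    rw [prod_range_succ, ih, ← hper.map_mod_nat k, ← prod_erase_mul _ _ hmem, mul_assoc,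
      (hidem _).eq]

theorem ZMod.two_isIdempotentElem (a : ZMod 2) : IsIdempotentElem a := by
  fin_cases a <;> rfl

theorem cshift_iterate_apply (n m : ℕ) (x : Fin n → ZMod 2) (i : Fin n) :
    (cshift n)^[m] x i = x ⟨(i.val + m) % n, Nat.mod_lt _ i.pos⟩ := by
  induction m generalizing x i with
  | zero => simp [Nat.mod_eq_of_lt i.isLt]
  | succ m ih =>
    rw [Function.iterate_succ_apply, ih]
    simp only [cshift, Nat.mod_add_mod, Nat.add_assoc]

theorem cshift_iterate_self (n : ℕ) : (cshift n)^[n] = id := by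
  funext x i
  simp [cshift_iterate_apply, Nat.mod_eq_of_lt i.isLt]

theorem periodic_cshift_iterate (n : ℕ) : Function.Periodic (fun m => (cshift n)^[m]) n := by
  intro m
  simp only [Function.iterate_add, cshift_iterate_self, Function.comp_id]

theorem stmt_0 (n k : ℕ) (hn : Even n) (hk : n / 2 ≤ k) :
    gamma n k = fun x i =>
      (cshift n)^[2 * k % n] x i *
        ∏ j ∈ Finset.range (n / 2), (1 + (cshift n)^[2 * j + 1] x i) := by
  funext x i
  have hn2 : 0 < n / 2 := by obtain ⟨c, rfl⟩ := hn; have := i.pos; omega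
  have hper : Function.Periodic (fun j => 1 + (cshift n)^[2 * j + 1] x i) (n / 2) := by
    intro j
    have h : 2 * (j + n / 2) + 1 = 2 * j + 1 + n := by obtain ⟨c, rfl⟩ := hn; omega
    simp only [h, periodic_cshift_iterate n (2 * j + 1)]
  rw [gamma, (periodic_cshift_iterate n).map_mod_nat,
    prod_range_eq_prod_range_of_periodic_of_isIdempotentElem hn2 hper
      (fun _ => ZMod.two_isIdempotentElem _) hk]
end

section
/- For even n, the n functions γ_0, γ_2, γ_4, …, γ_{2n-2} : 𝔽₂ⁿ → 𝔽₂ⁿ are linearly independent over 𝔽₂ (as elements of the 𝔽₂-vector space of all functions 𝔽₂ⁿ → 𝔽₂ⁿ). -/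
/-!
At coordinate `0` we have `γ_{2k}(x)_0 = x_{2k} * ∏_{j<k} (1 + x_{2j+1})`, with indices
taken mod `n = 2t`. For `i < t` the vector `e_{2i} + e_{n-1}` is detected only by `γ_{2i}`:
when `k ≥ t` the product contains the factor `1 + x_{n-1} = 0`. For `t ≤ i` the vector
`e_{2(i-t)}` has no odd support and is detected exactly by `γ_{2(i-t)}` and `γ_{2i}`. So pairing
the `γ_{2k}` with the functionals `F ↦ F(x_i)_0` for these test vectors `x_i` gives a lower
unitriangular matrix.
-/

open Finset Polynomial

theorem linearIndependent_of_lowerTriangular_pairing {ι R M : Type*} [Fintype ι]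
    [LinearOrder ι] [CommRing R] [IsDomain R] [AddCommGroup M] [Module R M]
    {v : ι → M} (f : ι → M →ₗ[R] R) (hlower : ∀ i k, i < k → f i (v k) = 0)
    (hdiag : ∀ i, f i (v i) ≠ 0) : LinearIndependent R v := by
  let A : Matrix ι ι R := fun i k => f i (v k)
  have hdet : A.det ≠ 0 := by
    rw [Matrix.det_of_isLowerTriangular A fun i k hik => hlower i k hik]
    exact Finset.prod_ne_zero_iff.2 fun i _ => hdiag i
  exact (Matrix.linearIndependent_cols_of_det_ne_zero hdet).of_comp (LinearMap.pi f)

section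

open Fin.NatCast

variable {n : ℕ} [NeZero n]

theorem cshift_apply (x : Fin n → ZMod 2) (i : Fin n) : cshift n x i = x (i + 1) :=
  congrArg x (Fin.ext (by simp [Fin.val_add]))

theorem iterate_cshift_apply (m : ℕ) (x : Fin n → ZMod 2) (i : Fin n) :
    (cshift n)^[m] x i = x (i + m) := by
  induction m generalizing x with
  | zero => simp
  | succ m ih => rw [Function.iterate_succ_apply, ih, cshift_apply, Nat.cast_succ, add_assoc]

theorem gamma_apply_zero (k : ℕ) (x : Fin n → ZMod 2) :
    gamma n k x 0 = x (2 * k : ℕ) * ∏ j ∈ range k, (1 + x (2 * j + 1 : ℕ)) := by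
  simp only [gamma, iterate_cshift_apply, zero_add]

theorem gamma_apply_zero_of_odd_eq_zero {k : ℕ} {x : Fin n → ZMod 2}
    (hx : ∀ j < k, x (2 * j + 1 : ℕ) = 0) : gamma n k x 0 = x (2 * k : ℕ) := by
  rw [gamma_apply_zero, Finset.prod_eq_one fun j hj => by rw [hx j (mem_range.1 hj), add_zero],
    mul_one]

theorem gamma_apply_zero_of_odd_eq_one {k j : ℕ} {x : Fin n → ZMod 2} (hj : j < k)
    (hx : x (2 * j + 1 : ℕ) = 1) : gamma n k x 0 = 0 := by
  rw [gamma_apply_zero, Finset.prod_eq_zero (mem_range.2 hj) (by rw [hx]; decide), mul_zero]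

end

section

open Fin.NatCast

variable {t : ℕ} [NeZero t]

theorem natCast_two_mul_add_one_ne (j m : ℕ) :
    ((2 * j + 1 : ℕ) : Fin (2 * t)) ≠ ((2 * m : ℕ) : Fin (2 * t)) := by
  intro h
  have := congrArg (· % 2) (Fin.ext_iff.1 h)
  simp only [Fin.val_natCast, Nat.mod_mod_of_dvd _ (dvd_mul_right 2 t)] at this
  omega

theorem natCast_two_mul_eq_iff (k m : ℕ) :
    ((2 * k : ℕ) : Fin (2 * t)) = ((2 * m : ℕ) : Fin (2 * t)) ↔ k % t = m % t := by
  simp only [Fin.ext_iff, Fin.val_natCast, Nat.mul_mod_mul_left]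
  omega

theorem gamma_apply_zero_single_add_single_last {i k : ℕ} (hi : i < t) (hk : k < 2 * t) :
    gamma (2 * t) k
        (Pi.single ((2 * i : ℕ) : Fin (2 * t)) (1 : ZMod 2) +
          Pi.single ((2 * (t - 1) + 1 : ℕ) : Fin (2 * t)) (1 : ZMod 2)) 0 =
      if k = i then 1 else 0 := by
  have hlast_odd (j : ℕ) :
      ((2 * (t - 1) + 1 : ℕ) : Fin (2 * t)) ≠ ((2 * j : ℕ) : Fin (2 * t)) :=
    natCast_two_mul_add_one_ne _ _
  rcases lt_or_ge k t with hkt | hkt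
  · rw [gamma_apply_zero_of_odd_eq_zero fun j hj => ?_]
    · simp only [Pi.add_apply, Pi.single_apply, natCast_two_mul_eq_iff, Nat.mod_eq_of_lt hkt,
        Nat.mod_eq_of_lt hi, (hlast_odd k).symm, if_false, add_zero]
    · have hne :
          ((2 * j + 1 : ℕ) : Fin (2 * t)) ≠ ((2 * (t - 1) + 1 : ℕ) : Fin (2 * t)) := by
        simp only [ne_eq, Fin.ext_iff, Fin.val_natCast]
        rw [Nat.mod_eq_of_lt (by omega), Nat.mod_eq_of_lt (by omega)]
        omega
      rw [Pi.add_apply, Pi.single_eq_of_ne (natCast_two_mul_add_one_ne _ _),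
        Pi.single_eq_of_ne hne, add_zero]
  · rw [if_neg (by omega)]
    refine gamma_apply_zero_of_odd_eq_one (j := t - 1) (by omega) ?_
    rw [Pi.add_apply, Pi.single_eq_of_ne (hlast_odd i), Pi.single_eq_same, zero_add]

theorem gamma_apply_zero_single {m k : ℕ} (hm : m < t) (hk : k < 2 * t) :
    gamma (2 * t) k (Pi.single ((2 * m : ℕ) : Fin (2 * t)) (1 : ZMod 2)) 0 =
      if k = m ∨ k = m + t then 1 else 0 := by
  rw [gamma_apply_zero_of_odd_eq_zero fun j _ =>
    Pi.single_eq_of_ne (natCast_two_mul_add_one_ne _ _) _]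
  have hkm : k % t = m % t ↔ k = m ∨ k = m + t := by
    rw [Nat.mod_eq_of_lt hm]
    rcases lt_or_ge k t with hkt | hkt
    · rw [Nat.mod_eq_of_lt hkt]; omega
    · rw [Nat.mod_eq_sub_mod hkt, Nat.mod_eq_of_lt (by omega)]; omega
  simp only [Pi.single_apply, natCast_two_mul_eq_iff, hkm]

variable (t) in
def testVector (i : ℕ) : Fin (2 * t) → ZMod 2 :=
  if i < t then
    Pi.single ((2 * i : ℕ) : Fin (2 * t)) 1 + Pi.single ((2 * (t - 1) + 1 : ℕ) : Fin (2 * t)) 1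
  else Pi.single ((2 * (i - t) : ℕ) : Fin (2 * t)) 1

theorem gamma_apply_zero_testVector {i k : ℕ} (hi : i < 2 * t) (hk : k < 2 * t) :
    gamma (2 * t) k (testVector t i) 0 = if k = i ∨ k + t = i then 1 else 0 := by
  by_cases hit : i < t
  · rw [testVector, if_pos hit, gamma_apply_zero_single_add_single_last hit hk]
    exact if_congr (by omega) rfl rfl
  · rw [testVector, if_neg hit, gamma_apply_zero_single (by omega) hk]
    exact if_congr (by omega) rfl rfl

end

theorem stmt_2 (n : ℕ) (hn : Even n) :
    LinearIndependent (ZMod 2)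
      (fun k : Fin n => (gamma n k : (Fin n → ZMod 2) → (Fin n → ZMod 2))) := by
  obtain ⟨t, rfl⟩ := hn.two_dvd
  rcases eq_or_ne t 0 with rfl | ht
  · exact linearIndependent_empty_type (ι := Fin 0)
  have : NeZero t := ⟨ht⟩
  refine linearIndependent_of_lowerTriangular_pairing
    (fun i => (LinearMap.proj (φ := fun _ : Fin (2 * t) => ZMod 2) 0).comp
      (LinearMap.proj (testVector t i))) (fun i k hik => ?_) (fun i => ?_)
  · simp only [LinearMap.comp_apply, LinearMap.proj_apply,
      gamma_apply_zero_testVector i.isLt k.isLt]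
    exact if_neg (by omega)
  · simp only [LinearMap.comp_apply, LinearMap.proj_apply,
      gamma_apply_zero_testVector i.isLt i.isLt]
    exact one_ne_zero
end

section
/- Let m ≥ 2 be even and f = γ_0 + Σ_{i=1}^t a_i γ_{2i} with a_i ∈ 𝔽₂ (setting a_0 = 1). Then γ_m ∘ f = Σ_{i=0}^t a_i γ_{2i+m} as functions on 𝔽₂ⁿ. -/
/-!
Fix a coordinate `i` and put `X q = (S^q x)_i`. Since `S` commutes with every `γ_{2k}`,
`(S^p γ_{2k}(x))_i = X_{2k+p} ∏_{j<k} (1 + X_{2j+1+p})`, so the claim becomes an identity between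
products in the Boolean ring `𝔽₂`. Expand the leading factor `Y_{2l}` of `γ_{2l}(f x)`, where
`Y q = (S^q f(x))_i`. Against each resulting term `a_k X_{2k+2l} ∏_{j<k} (1 + X_{2j+2l+1})`, the
factors `1 + Y_{2s+1}` (`s < l`) may be replaced one by one by `1 + X_{2s+1}`: with the term and
the factors `1 + X_{2j+1}` (`s < j < l`), every summand of `Y_{2s+1}` other than `X_{2s+1}` yields a
product containing both some `X_q` and `1 + X_q`, and `X_q (1 + X_q) = 0`. What is left is
`a_k X_{2k+2l} ∏_{j<k+l} (1 + X_{2j+1}) = a_k γ_{2k+2l}(x)_i`.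
-/

open Finset Polynomial

section CommRing

variable {R : Type*} [CommRing R]

/-- Entry `p` of `γ_{2k}(x)` when `X q` stands for the entry `x_{i+q}` of `x`. -/
def gammaSeq (k : ℕ) (X : ℕ → R) (p : ℕ) : R :=
  X (2 * k + p) * ∏ j ∈ range k, (1 + X (2 * j + 1 + p))

variable (X : ℕ → R)

theorem gammaSeq_zero (p : ℕ) : gammaSeq 0 X p = X p := by
  simp [gammaSeq]

theorem gammaSeq_add (k l p : ℕ) :
    gammaSeq (k + l) X p = gammaSeq k X (2 * l + p) * ∏ j ∈ range l, (1 + X (2 * j + 1 + p)) := by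
  simp only [gammaSeq, add_comm k l, prod_range_add]
  rw [show 2 * (l + k) + p = 2 * k + (2 * l + p) by ring]
  simp only [show ∀ j, 2 * (l + j) + 1 + p = 2 * j + 1 + (2 * l + p) by intro j; ring]
  ring

variable (a : ℕ → R) (t : ℕ)

/-- The same reading of `f = ∑_{k ≤ t} a_k γ_{2k}`. -/
def gammaComb (p : ℕ) : R :=
  ∑ k ∈ range (t + 1), a k * gammaSeq k X p

end CommRing

section BooleanRing

variable {R : Type*} [BooleanRing R]

theorem mul_prod_one_add_eq_zero {ι κ : Type*} (X : κ → R) {f : ι → κ} {s : Finset ι} {i : ι}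
    {q : κ} (hi : i ∈ s) (hq : f i = q) : X q * ∏ j ∈ s, (1 + X (f j)) = 0 := by
  obtain ⟨c, hc⟩ := dvd_prod_of_mem (fun j => 1 + X (f j)) hi
  rw [hc, ← mul_assoc, hq, BooleanRing.mul_one_add_self, zero_mul]

variable (X : ℕ → R) (a : ℕ → R) (t : ℕ)

theorem gammaSeq_mul_gammaSeq_mul_prod_eq_zero {k k' s l : ℕ} (hk' : 1 ≤ k') (hs : s < l) :
    gammaSeq k X (2 * l) * gammaSeq k' X (2 * s + 1) * ∏ j ∈ Ico (s + 1) l, (1 + X (2 * j + 1))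
      = 0 := by
  rcases lt_or_ge (s + k') l with hlt | hge
  · calc _ = (gammaSeq k X (2 * l) * ∏ j ∈ range k', (1 + X (2 * j + 1 + (2 * s + 1)))) *
            (X (2 * k' + (2 * s + 1)) * ∏ j ∈ Ico (s + 1) l, (1 + X (2 * j + 1))) := by
          simp only [gammaSeq]; ring
      _ = 0 := mul_eq_zero_of_right _
          (mul_prod_one_add_eq_zero X (i := s + k') (by simp only [mem_Ico]; omega) (by omega))
  rcases lt_or_ge (s + k') (k + l) with hlt | hge'
  · calc _ = (X (2 * k + 2 * l) * (∏ j ∈ range k', (1 + X (2 * j + 1 + (2 * s + 1)))) *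
              ∏ j ∈ Ico (s + 1) l, (1 + X (2 * j + 1))) *
            (X (2 * k' + (2 * s + 1)) * ∏ j ∈ range k, (1 + X (2 * j + 1 + 2 * l))) := by
          simp only [gammaSeq]; ring
      _ = 0 := mul_eq_zero_of_right _
          (mul_prod_one_add_eq_zero X (i := s + k' - l) (by simp only [mem_range]; omega)
            (by omega))
  · calc _ = ((∏ j ∈ range k, (1 + X (2 * j + 1 + 2 * l))) * X (2 * k' + (2 * s + 1)) *
              ∏ j ∈ Ico (s + 1) l, (1 + X (2 * j + 1))) *
            (X (2 * k + 2 * l) * ∏ j ∈ range k', (1 + X (2 * j + 1 + (2 * s + 1)))) := by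
          simp only [gammaSeq]; ring
      _ = 0 := mul_eq_zero_of_right _
          (mul_prod_one_add_eq_zero X (i := k + l - s - 1) (by simp only [mem_range]; omega)
            (by omega))

theorem gammaSeq_mul_one_add_gammaComb_mul_prod (ha0 : a 0 = 1) (k : ℕ) {s l : ℕ} (hs : s < l) :
    gammaSeq k X (2 * l) * (1 + gammaComb X a t (2 * s + 1)) *
        ∏ j ∈ Ico (s + 1) l, (1 + X (2 * j + 1))
      = gammaSeq k X (2 * l) * ∏ j ∈ Ico s l, (1 + X (2 * j + 1)) := by
  have hvanish : ∑ k' ∈ range t, gammaSeq k X (2 * l) *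
      (a (k' + 1) * gammaSeq (k' + 1) X (2 * s + 1)) * ∏ j ∈ Ico (s + 1) l, (1 + X (2 * j + 1))
        = 0 :=
    sum_eq_zero fun k' _ => by
      linear_combination a (k' + 1) * gammaSeq_mul_gammaSeq_mul_prod_eq_zero X (k := k)
        (Nat.le_add_left 1 k') hs
  rw [← sum_mul, ← mul_sum] at hvanish
  rw [gammaComb, sum_range_succ', gammaSeq_zero, ha0, one_mul, prod_eq_prod_Ico_succ_bot hs]
  linear_combination hvanish

theorem gammaSeq_mul_prod_one_add_gammaComb (ha0 : a 0 = 1) (k l : ℕ) :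
    gammaSeq k X (2 * l) * ∏ j ∈ range l, (1 + gammaComb X a t (2 * j + 1))
      = gammaSeq k X (2 * l) * ∏ j ∈ range l, (1 + X (2 * j + 1)) := by
  suffices ∀ s ≤ l, gammaSeq k X (2 * l) * (∏ j ∈ range s, (1 + gammaComb X a t (2 * j + 1))) *
      ∏ j ∈ Ico s l, (1 + X (2 * j + 1))
        = gammaSeq k X (2 * l) * ∏ j ∈ range l, (1 + X (2 * j + 1)) by
    simpa using this l le_rfl
  intro s hs
  induction s with
  | zero => rw [prod_range_zero, mul_one, range_eq_Ico]
  | succ s ih =>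
    rw [prod_range_succ]
    linear_combination (∏ j ∈ range s, (1 + gammaComb X a t (2 * j + 1))) *
        gammaSeq_mul_one_add_gammaComb_mul_prod X a t ha0 k hs + ih (by omega)

theorem gammaSeq_gammaComb (ha0 : a 0 = 1) (l : ℕ) :
    gammaSeq l (gammaComb X a t) 0 = ∑ k ∈ range (t + 1), a k * gammaSeq (k + l) X 0 := by
  rw [gammaSeq, add_zero, gammaComb, sum_mul]
  refine sum_congr rfl fun k _ => ?_
  simp only [add_zero]
  rw [mul_assoc, gammaSeq_mul_prod_one_add_gammaComb X a t ha0, gammaSeq_add, add_zero]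

end BooleanRing

def cshiftLinearMap (n : ℕ) : Module.End (ZMod 2) (Fin n → ZMod 2) where
  toFun := cshift n
  map_add' _ _ := rfl
  map_smul' _ _ := rfl

theorem iterate_cshift_sum_smul_apply (n p : ℕ) {ι : Type*} (s : Finset ι) (c : ι → ZMod 2)
    (y : ι → Fin n → ZMod 2) (i : Fin n) :
    (cshift n)^[p] (∑ k ∈ s, c k • y k) i = ∑ k ∈ s, c k * (cshift n)^[p] (y k) i := by
  rw [show cshift n = cshiftLinearMap n from rfl, ← Module.End.coe_pow, map_sum]
  simp [Finset.sum_apply]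

theorem commute_cshift_gamma (n k : ℕ) : Function.Commute (cshift n) (gamma n k) := by
  intro x
  funext i
  simp only [cshift, gamma]
  congr 1
  · conv_rhs => rw [← Function.iterate_succ_apply, Function.iterate_succ_apply']
    rfl
  · exact prod_congr rfl fun j _ => by
      conv_rhs => rw [← Function.iterate_succ_apply, Function.iterate_succ_apply']
      rfl

theorem iterate_cshift_gamma_apply (n k p : ℕ) (x : Fin n → ZMod 2) (i : Fin n) :
    (cshift n)^[p] (gamma n k x) i = gammaSeq k (fun q => (cshift n)^[q] x i) p := by
  rw [(commute_cshift_gamma n k).iterate_left p x]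
  simp only [gamma, gammaSeq, ← Function.iterate_add_apply]

theorem stmt_6_general (n t l : ℕ) (a : ℕ → ZMod 2) (ha0 : a 0 = 1)
    (f : (Fin n → ZMod 2) → Fin n → ZMod 2)
    (hf : f = fun x => ∑ i ∈ Finset.range (t + 1), a i • gamma n i x) :
    gamma n l ∘ f = fun x => ∑ i ∈ Finset.range (t + 1), a i • gamma n (i + l) x := by
  let _ : BooleanRing (ZMod 2) :=
    { (inferInstance : CommRing (ZMod 2)) with isIdempotentElem := fun a => by fin_cases a <;> rfl }
  funext x i
  set X := fun q => (cshift n)^[q] x i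
  have hshift : (fun q => (cshift n)^[q] (f x) i) = gammaComb X a t := by
    funext p
    simp only [hf, iterate_cshift_sum_smul_apply, iterate_cshift_gamma_apply, gammaComb, X]
  calc (gamma n l ∘ f) x i = gammaSeq l (fun q => (cshift n)^[q] (f x) i) 0 :=
        iterate_cshift_gamma_apply n l 0 (f x) i
    _ = ∑ k ∈ range (t + 1), a k * gammaSeq (k + l) X 0 := by
        rw [hshift, gammaSeq_gammaComb X a t ha0]
    _ = _ := by
        simp only [Finset.sum_apply, Pi.smul_apply, smul_eq_mul]
        exact sum_congr rfl fun k _ => congrArg _ (iterate_cshift_gamma_apply n (k + l) 0 x i).symm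

theorem stmt_6 (n t l : ℕ) (hl : 1 ≤ l) (a : ℕ → ZMod 2) (ha0 : a 0 = 1)
    (f : (Fin n → ZMod 2) → Fin n → ZMod 2)
    (hf : f = fun x => ∑ i ∈ Finset.range (t + 1), a i • gamma n i x) :
    gamma n l ∘ f = fun x => ∑ i ∈ Finset.range (t + 1), a i • gamma n (i + l) x :=
  stmt_6_general n t l a ha0 f hf
end

section
/- If n = 2^s·m with m odd and s ≥ 1, then in 𝔽₂[X]: Xⁿ + X^{n/2} = X^{n/2}·(X^m + 1)^{2^{s-1}}, and consequently for a polynomial F with F(0) = 1, gcd(F, Xⁿ + X^{n/2}) = 1 if and only if gcd(F, 1 + X^m) = 1. -/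
/-! In characteristic 2 the Frobenius gives `(X^m + 1)^(2^t) = X^(2^t m) + 1`, so
`X^n + X^(n/2) = X^(n/2) (X^m + 1)^(2^t)` with `t = s - 1`. A polynomial with nonzero constant
term is coprime to `X`, hence to `X^(n/2)`, and coprimality with a positive power of `X^m + 1`
is coprimality with `X^m + 1` itself. -/

open Polynomial

theorem pow_two_pow_succ_mul_add_pow_two_pow_mul {R : Type*} [CommSemiring R] [ExpChar R 2]
    (x : R) (t m : ℕ) :
    x ^ (2 ^ (t + 1) * m) + x ^ (2 ^ t * m) = x ^ (2 ^ t * m) * (x ^ m + 1) ^ 2 ^ t := by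
  rw [add_pow_expChar_pow, one_pow, ← pow_mul, mul_add, mul_one, ← pow_add, mul_comm m,
    ← two_mul, pow_succ', mul_assoc]

theorem Polynomial.isCoprime_X_of_coeff_zero_ne_zero {K : Type*} [Field K] {F : K[X]}
    (hF : F.coeff 0 ≠ 0) : IsCoprime F X := by
  rwa [isCoprime_comm, irreducible_X.coprime_iff_not_dvd, X_dvd_iff]

theorem isCoprime_mul_pow_right_iff {R : Type*} [CommSemiring R] {a b c : R} {k j : ℕ}
    (hab : IsCoprime a b) (hj : j ≠ 0) : IsCoprime a (b ^ k * c ^ j) ↔ IsCoprime a c := by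
  rw [IsCoprime.mul_right_iff, IsCoprime.pow_right_iff (Nat.pos_of_ne_zero hj)]
  exact and_iff_right hab.pow_right

theorem stmt_10_general (n s m : ℕ) (hs : 1 ≤ s) (hn : n = 2 ^ s * m) :
    (X : Polynomial (ZMod 2)) ^ n + X ^ (n / 2) =
      X ^ (n / 2) * ((X : Polynomial (ZMod 2)) ^ m + 1) ^ 2 ^ (s - 1) ∧
    ∀ F : Polynomial (ZMod 2), F.coeff 0 = 1 →
      (IsCoprime F ((X : Polynomial (ZMod 2)) ^ n + X ^ (n / 2)) ↔
        IsCoprime F (1 + (X : Polynomial (ZMod 2)) ^ m)) := by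
  obtain ⟨t, rfl⟩ : ∃ t, s = t + 1 := ⟨s - 1, by omega⟩
  have hhalf : n / 2 = 2 ^ t * m := by
    rw [hn, pow_succ, mul_right_comm, Nat.mul_div_cancel _ two_pos]
  have hfactor : (X : (ZMod 2)[X]) ^ n + X ^ (n / 2) = X ^ (n / 2) * (X ^ m + 1) ^ 2 ^ t := by
    rw [hhalf, hn, pow_two_pow_succ_mul_add_pow_two_pow_mul]
  refine ⟨hfactor, fun F hF => ?_⟩
  have hFX : IsCoprime F X := isCoprime_X_of_coeff_zero_ne_zero (hF ▸ one_ne_zero)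
  rw [hfactor, isCoprime_mul_pow_right_iff hFX (pow_ne_zero _ two_ne_zero), add_comm]

theorem stmt_10 (n s m : ℕ) (hs : 1 ≤ s) (hm : Odd m) (hn : n = 2 ^ s * m) :
    (X : Polynomial (ZMod 2)) ^ n + X ^ (n / 2) =
      X ^ (n / 2) * ((X : Polynomial (ZMod 2)) ^ m + 1) ^ 2 ^ (s - 1) ∧
    ∀ F : Polynomial (ZMod 2), F.coeff 0 = 1 →
      (IsCoprime F ((X : Polynomial (ZMod 2)) ^ n + X ^ (n / 2)) ↔
        IsCoprime F (1 + (X : Polynomial (ZMod 2)) ^ m)) :=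
  stmt_10_general n s m hs hn
end

section
/- Let n ≥ 1 be odd and k minimal with 3k ≥ (n+1)/2. Then in 𝔽₂[X]/(X^{(n+1)/2}) the inverse of [1 + X + X²] equals [P_{3k}(X)] if n ≡ 3, 5 (mod 6) and [P_{3k}(X) − X^{3k−2}] if n ≡ 1 (mod 6), where P_{3k}(X) = (1+X)(1+X³+…+X^{3(k-1)}). -/
open Polynomial

/-- P_{3k}(X) = (1+X)(1 + X³ + … + X^{3(k-1)}) over 𝔽₂, with P_0 = 0. -/
noncomputable def Ppoly (k : ℕ) : Polynomial (ZMod 2) :=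
  (1 + X) * ∑ j ∈ Finset.range k, X ^ (3 * j)

theorem Ideal.Quotient.mk_span_pow_eq_zero {R : Type*} [CommRing R] (a : R) {m t : ℕ}
    (h : m ≤ t) : Ideal.Quotient.mk (Ideal.span {a ^ m}) (a ^ t) = 0 := by
  rw [Ideal.Quotient.eq_zero_iff_mem, Ideal.mem_span_singleton]
  exact pow_dvd_pow a h

/-- In characteristic 2, `(1 + x + x²)(1 + x) = x³ - 1`, so the geometric sum in `x³` telescopes. -/
theorem CharTwo.one_add_add_sq_mul_one_add_mul_geom_sum_cube {R : Type*} [CommRing R]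
    [CharP R 2] (x : R) (k : ℕ) :
    (1 + x + x ^ 2) * ((1 + x) * ∑ j ∈ Finset.range k, x ^ (3 * j)) = 1 + x ^ (3 * k) := by
  have hcube : (1 + x + x ^ 2) * (1 + x) = x ^ 3 - 1 := by
    linear_combination (1 + x + x ^ 2) * CharTwo.two_eq_zero (R := R)
  calc (1 + x + x ^ 2) * ((1 + x) * ∑ j ∈ Finset.range k, x ^ (3 * j))
      = (x ^ 3 - 1) * ∑ j ∈ Finset.range k, (x ^ 3) ^ j := by
        simp_rw [← mul_assoc, hcube, pow_mul]
    _ = (x ^ 3) ^ k - 1 := mul_geom_sum _ _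
    _ = 1 + x ^ (3 * k) := by rw [← pow_mul, CharTwo.sub_eq_add, add_comm]

theorem one_add_X_add_X_sq_mul_Ppoly (k : ℕ) :
    (1 + X + X ^ 2) * Ppoly k = 1 + (X : Polynomial (ZMod 2)) ^ (3 * k) :=
  CharTwo.one_add_add_sq_mul_one_add_mul_geom_sum_cube X k

theorem one_add_X_add_X_sq_mul_Ppoly_sub {k : ℕ} (hk : 1 ≤ k) :
    (1 + X + X ^ 2) * (Ppoly k - X ^ (3 * k - 2)) =
      1 + (X : Polynomial (ZMod 2)) ^ (3 * k - 2) + X ^ (3 * k - 1) := by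
  obtain ⟨a, rfl⟩ : ∃ a, k = a + 1 := ⟨k - 1, by omega⟩
  rw [mul_sub, one_add_X_add_X_sq_mul_Ppoly, show 3 * (a + 1) - 2 = 3 * a + 1 by omega,
    show 3 * (a + 1) - 1 = 3 * a + 2 by omega]
  linear_combination (-(X : Polynomial (ZMod 2)) ^ (3 * a + 1) - X ^ (3 * a + 2)) *
    CharTwo.two_eq_zero (R := Polynomial (ZMod 2))

theorem stmt_18_general (n k : ℕ)
    (hk : (n + 1) / 2 ≤ 3 * k) (hmin : ∀ j : ℕ, (n + 1) / 2 ≤ 3 * j → k ≤ j) :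
    (n % 6 = 3 ∨ n % 6 = 5 →
      Ideal.Quotient.mk (Ideal.span {(X : Polynomial (ZMod 2)) ^ ((n + 1) / 2)})
          (1 + X + X ^ 2) *
        Ideal.Quotient.mk (Ideal.span {(X : Polynomial (ZMod 2)) ^ ((n + 1) / 2)})
          (Ppoly k) = 1) ∧
    (n % 6 = 1 →
      Ideal.Quotient.mk (Ideal.span {(X : Polynomial (ZMod 2)) ^ ((n + 1) / 2)})
          (1 + X + X ^ 2) *
        Ideal.Quotient.mk (Ideal.span {(X : Polynomial (ZMod 2)) ^ ((n + 1) / 2)})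
          (Ppoly k - X ^ (3 * k - 2)) = 1) := by
  refine ⟨fun _ => ?_, fun hn => ?_⟩
  · rw [← map_mul, one_add_X_add_X_sq_mul_Ppoly, map_add, map_one,
      Ideal.Quotient.mk_span_pow_eq_zero X hk, add_zero]
  · -- Here `(n + 1) / 2 ≡ 1 (mod 3)`, so minimality of `k` forces `3 * k - 2 = (n + 1) / 2`.
    have hle : (n + 1) / 2 ≤ 3 * k - 2 := by
      have := hmin (((n + 1) / 2 + 2) / 3) (by omega)
      omega
    rw [← map_mul, one_add_X_add_X_sq_mul_Ppoly_sub (by omega), map_add, map_add, map_one,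
      Ideal.Quotient.mk_span_pow_eq_zero X hle,
      Ideal.Quotient.mk_span_pow_eq_zero X (hle.trans (by omega)), add_zero, add_zero]

theorem stmt_18 (n k : ℕ) (hn : 1 ≤ n) (hodd : Odd n)
    (hk : (n + 1) / 2 ≤ 3 * k) (hmin : ∀ j : ℕ, (n + 1) / 2 ≤ 3 * j → k ≤ j) :
    (n % 6 = 3 ∨ n % 6 = 5 →
      Ideal.Quotient.mk (Ideal.span {(X : Polynomial (ZMod 2)) ^ ((n + 1) / 2)})
          (1 + X + X ^ 2) *
        Ideal.Quotient.mk (Ideal.span {(X : Polynomial (ZMod 2)) ^ ((n + 1) / 2)})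
          (Ppoly k) = 1) ∧
    (n % 6 = 1 →
      Ideal.Quotient.mk (Ideal.span {(X : Polynomial (ZMod 2)) ^ ((n + 1) / 2)})
          (1 + X + X ^ 2) *
        Ideal.Quotient.mk (Ideal.span {(X : Polynomial (ZMod 2)) ^ ((n + 1) / 2)})
          (Ppoly k - X ^ (3 * k - 2)) = 1) :=
  stmt_18_general n k hk hmin
end
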